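/- arXiv:1610.04633 — 2 statements merged into one kernel-verified Lean document; each statement's English description precedes it below -/
import Mathlib

section
/- Let D be a degree on the ordinal S. The collapsing function C is continuous in its first argument: if a < S is a limit ordinal and C(a,b) is defined, then C(a',b) is defined for every a' < a, and C(a,b) = sup_{a' < a} C(a',b). -/
open Ordinal Set

noncomputable section

/-- The set of limit points of a set `X` of ordinals: the limit ordinals `c` such that
`X ∩ c` is unbounded in `c`. -/
def limPts (X : Set Ordinal) : Set Ordinal :=
  {c | Order.IsSuccLimit c ∧ ∀ b < c, ∃ x ∈ X, b < x ∧ x < c}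

/-- `D` is a degree on the ordinal `S`.  For `c, a < S`, `D c a` reads "`c` has degree `a`". -/
structure IsDegree (S : Ordinal) (D : Ordinal → Ordinal → Prop) : Prop where
  /-- every `c < S` has degree `0` -/
  deg_zero : ∀ c < S, D c 0
  /-- `0` only has degree `0` -/
  zero_only : ∀ a < S, D 0 a → a = 0
  /-- for a limit `a`, `c` has degree `a` iff it has every degree less than `a` -/
  limit : ∀ a < S, Order.IsSuccLimit a → ∀ c < S, (D c a ↔ ∀ b < a, D c b)
  /-- the successor condition -/
  succ : ∀ a, a + 1 < S →
      {c | c < S ∧ D c (a + 1)} = limPts {c | c < S ∧ D c a} ∩ {c | c < S} ∨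
      ∃ d ≤ a, d < S ∧ Order.IsSuccLimit d ∧
        {c | c < S ∧ D c (a + 1)} =
          (limPts {c | c < S ∧ D c a} ∪ {c | (c < S ∧ D c a) ∧ c ≤ d}) ∩ {c | c < S}

/-- The set of candidate values for the collapsing function `C(a,b)`: ordinals `c < S`
above `b` having some degree `a' ≥ a`. -/
def CSet (S : Ordinal) (D : Ordinal → Ordinal → Prop) (a b : Ordinal) : Set Ordinal :=
  {c | c < S ∧ b < c ∧ ∃ a', a ≤ a' ∧ a' < S ∧ D c a'}

/-- `C(a,b)` is defined iff some candidate value exists. -/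
def CDefined (S : Ordinal) (D : Ordinal → Ordinal → Prop) (a b : Ordinal) : Prop :=
  (CSet S D a b).Nonempty

/-- The collapsing function `C(a,b)`: the least element of `CSet S D a b`
(meaningful when `CDefined S D a b`). -/
def Cval (S : Ordinal) (D : Ordinal → Ordinal → Prop) (a b : Ordinal) : Ordinal :=
  sInf (CSet S D a b)

/-- `a` is maximal in `C(a,b)`: `C(a,b)` is defined and has no degree strictly greater
than `a`. -/
def CMaximal (S : Ordinal) (D : Ordinal → Ordinal → Prop) (a b : Ordinal) : Prop :=
  CDefined S D a b ∧ ∀ a', a < a' → a' < S → ¬ D (Cval S D a b) a'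

/-- `b` is minimal in `C(a,b)`: `C(a,b)` is defined and `C(a,b') < C(a,b)` for every
`b' < b`. -/
def CMinimal (S : Ordinal) (D : Ordinal → Ordinal → Prop) (a b : Ordinal) : Prop :=
  CDefined S D a b ∧ ∀ b' < b, Cval S D a b' < Cval S D a b

end

/-!
By induction on `a`, the degree sets `C_a = {c < S | D c a}` decrease as `a` grows and contain
their limit points below `S` (the successor axiom gives `lim C_e ⊆ C_{e+1} ⊆ lim C_e ∪ C_e`), so
each `C_a` is closed under suprema below `S`. Since `C(·,b)` is monotone, `s = sup_{a' < a} C(a',b)`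
is at most `C(a,b)`. For `β < a`, `s` is also the supremum of the `C(a',b)` with `β ≤ a' < a`,
which all lie in `C_β`; so `s` has every degree `β < a`, hence degree `a`, and `C(a,b) ≤ s`.
-/

theorem csSup_image_Ico_eq {ι α : Type*} [LinearOrder ι] [ConditionallyCompleteLattice α]
    {f : ι → α} {a β : ι} (hβ : β < a) (hf : MonotoneOn f (Iio a))
    (hbdd : BddAbove (f '' Iio a)) : sSup (f '' Ico β a) = sSup (f '' Iio a) := by
  have hsub : f '' Ico β a ⊆ f '' Iio a := image_mono Ico_subset_Iio_self
  have hne : (f '' Ico β a).Nonempty := ⟨f β, mem_image_of_mem f ⟨le_rfl, hβ⟩⟩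
  refine le_antisymm (csSup_le_csSup hbdd hne hsub) (csSup_le (hne.mono hsub) ?_)
  rintro _ ⟨i, hi, rfl⟩
  have hmax : max i β ∈ Ico β a := ⟨le_max_right i β, max_lt hi hβ⟩
  exact (hf hi hmax.2 (le_max_left i β)).trans
    (le_csSup (hbdd.mono hsub) (mem_image_of_mem f hmax))

theorem limPts_mono {X Y : Set Ordinal} (h : X ⊆ Y) : limPts X ⊆ limPts Y := by
  rintro c ⟨hlim, hcof⟩
  refine ⟨hlim, fun b hb => ?_⟩
  obtain ⟨x, hx, hbx, hxc⟩ := hcof b hb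
  exact ⟨x, h hx, hbx, hxc⟩

theorem csSup_mem_limPts {X : Set Ordinal} (hne : X.Nonempty) (hbdd : BddAbove X)
    (hX : sSup X ∉ X) : sSup X ∈ limPts X := by
  refine ⟨(isLUB_csSup hne hbdd).isSuccLimit_of_notMem hne hX, fun b hb => ?_⟩
  obtain ⟨x, hx, hbx⟩ := exists_lt_of_lt_csSup hne hb
  exact ⟨x, hx, hbx, (le_csSup hbdd hx).lt_of_ne (ne_of_mem_of_not_mem hx hX)⟩

namespace IsDegree

variable {S : Ordinal} {D : Ordinal → Ordinal → Prop}

theorem succ_of_mem_limPts (hD : IsDegree S D) {e c : Ordinal} (he : e + 1 < S) (hc : c < S)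
    (hlim : c ∈ limPts {c | c < S ∧ D c e}) : D c (e + 1) := by
  have : c ∈ {c | c < S ∧ D c (e + 1)} := by
    rcases hD.succ e he with heq | ⟨d, -, -, -, heq⟩ <;> rw [heq]
    · exact ⟨hlim, hc⟩
    · exact ⟨Or.inl hlim, hc⟩
  exact this.2

theorem of_succ (hD : IsDegree S D) {e c : Ordinal} (he : e + 1 < S) (hc : c < S)
    (hclosed : ∀ c < S, c ∈ limPts {c | c < S ∧ D c e} → D c e) (h : D c (e + 1)) : D c e := by
  have hmem : c ∈ {c | c < S ∧ D c (e + 1)} := ⟨hc, h⟩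
  rcases hD.succ e he with heq | ⟨d, -, -, -, heq⟩ <;> rw [heq] at hmem
  · exact hclosed c hc hmem.1
  · rcases hmem.1 with hlim | hle
    · exact hclosed c hc hlim
    · exact hle.1.2

theorem antitone_and_closed (hD : IsDegree S D) {a : Ordinal} (ha : a < S) :
    (∀ b ≤ a, ∀ c < S, D c a → D c b) ∧
      ∀ c < S, c ∈ limPts {c | c < S ∧ D c a} → D c a := by
  induction a using WellFoundedLT.induction with
  | _ a IH =>
  rcases zero_or_succ_or_isSuccLimit a with rfl | ⟨e, rfl⟩ | hlim
  · exact ⟨fun b hb _ _ h => nonpos_iff_eq_zero.mp hb ▸ h, fun c hc _ => hD.deg_zero c hc⟩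
  · rw [Order.succ_eq_add_one] at ha ⊢
    have he : e < S := (lt_add_one e).trans ha
    obtain ⟨IHanti, IHclosed⟩ := IH e (lt_add_one e) he
    have hdown : ∀ c < S, D c (e + 1) → D c e := fun c hc => hD.of_succ ha hc IHclosed
    refine ⟨fun b hb c hc h => ?_, fun c hc hlim => hD.succ_of_mem_limPts ha hc ?_⟩
    · rcases hb.eq_or_lt with rfl | hb
      · exact h
      · exact IHanti b (Order.lt_add_one_iff.mp hb) c hc (hdown c hc h)
    · refine limPts_mono (fun x hx => ?_) hlim
      exact ⟨hx.1, hdown x hx.1 hx.2⟩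
  · have hdown : ∀ b < a, ∀ c < S, D c a → D c b :=
      fun b hb c hc h => (hD.limit a ha hlim c hc).mp h b hb
    refine ⟨fun b hb c hc h => ?_, fun c hc hlimpt => (hD.limit a ha hlim c hc).mpr ?_⟩
    · rcases hb.eq_or_lt with rfl | hb
      · exact h
      · exact hdown b hb c hc h
    · intro b hb
      refine (IH b hb (hb.trans ha)).2 c hc (limPts_mono (fun x hx => ?_) hlimpt)
      exact ⟨hx.1, hdown b hb x hx.1 hx.2⟩

theorem of_le (hD : IsDegree S D) {a b c : Ordinal} (ha : a < S) (hc : c < S) (hba : b ≤ a)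
    (h : D c a) : D c b :=
  (hD.antitone_and_closed ha).1 b hba c hc h

theorem csSup_of_forall (hD : IsDegree S D) {a : Ordinal} (ha : a < S) {X : Set Ordinal}
    (hne : X.Nonempty) (hbdd : BddAbove X) (hS : sSup X < S) (hX : ∀ c ∈ X, D c a) :
    D (sSup X) a := by
  by_cases hmem : sSup X ∈ X
  · exact hX _ hmem
  · refine (hD.antitone_and_closed ha).2 _ hS (limPts_mono (fun c hc => ?_)
      (csSup_mem_limPts hne hbdd hmem))
    exact ⟨(le_csSup hbdd hc).trans_lt hS, hX c hc⟩

end IsDegree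

section Collapsing

variable {S : Ordinal} {D : Ordinal → Ordinal → Prop}

theorem CSet_antitone_fst {a a' b : Ordinal} (h : a' ≤ a) : CSet S D a b ⊆ CSet S D a' b := by
  rintro c ⟨hc, hbc, e, hae, he, hd⟩
  exact ⟨hc, hbc, e, h.trans hae, he, hd⟩

theorem CDefined.of_le_fst {a a' b : Ordinal} (h : CDefined S D a b) (ha' : a' ≤ a) :
    CDefined S D a' b :=
  h.mono (CSet_antitone_fst ha')

theorem Cval_mem {a b : Ordinal} (h : CDefined S D a b) : Cval S D a b ∈ CSet S D a b := csInf_mem h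

theorem Cval_le {a b c : Ordinal} (h : c ∈ CSet S D a b) : Cval S D a b ≤ c := csInf_le' h

theorem Cval_mono_fst {a a' b : Ordinal} (h : CDefined S D a b) (ha' : a' ≤ a) :
    Cval S D a' b ≤ Cval S D a b :=
  Cval_le (CSet_antitone_fst ha' (Cval_mem h))

theorem Cval_monotoneOn_fst {a b : Ordinal} (h : CDefined S D a b) :
    MonotoneOn (fun a' => Cval S D a' b) (Iio a) :=
  fun _ _ _ ha'' ha' => Cval_mono_fst (h.of_le_fst (le_of_lt ha'')) ha'

theorem IsDegree.degree_Cval (hD : IsDegree S D) {a b β : Ordinal} (h : CDefined S D a b)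
    (hβ : β ≤ a) : D (Cval S D a b) β := by
  obtain ⟨hc, -, e, hae, he, hd⟩ := Cval_mem h
  exact hD.of_le he hc (hβ.trans hae) hd

end Collapsing

theorem Cval_continuous_fst (S : Ordinal) (D : Ordinal → Ordinal → Prop)
    (hD : IsDegree S D) (a b : Ordinal) (ha : a < S) (halim : Order.IsSuccLimit a)
    (h : CDefined S D a b) :
    (∀ a' < a, CDefined S D a' b) ∧
      Cval S D a b = sSup ((fun a' => Cval S D a' b) '' Set.Iio a) := by
  have hdef : ∀ a' < a, CDefined S D a' b := fun a' ha' => h.of_le_fst ha'.le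
  refine ⟨hdef, ?_⟩
  set f := fun a' => Cval S D a' b
  have hfle : ∀ c ∈ f '' Iio a, c ≤ Cval S D a b := by
    rintro _ ⟨a', ha', rfl⟩
    exact Cval_mono_fst h ha'.le
  have hbdd : BddAbove (f '' Iio a) := ⟨_, hfle⟩
  have hsup_le : sSup (f '' Iio a) ≤ Cval S D a b := csSup_le ⟨f 0, 0, halim.pos, rfl⟩ hfle
  have hsup_lt : sSup (f '' Iio a) < S := hsup_le.trans_lt (Cval_mem h).1
  have hb_lt : b < sSup (f '' Iio a) :=
    (Cval_mem (hdef 0 halim.pos)).2.1.trans_le (le_csSup hbdd ⟨0, halim.pos, rfl⟩)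
  have hdeg : ∀ β < a, D (sSup (f '' Iio a)) β := by
    intro β hβ
    have htail := csSup_image_Ico_eq hβ (Cval_monotoneOn_fst h) hbdd
    rw [← htail] at hsup_lt ⊢
    refine hD.csSup_of_forall (hβ.trans ha) ⟨f β, β, ⟨le_rfl, hβ⟩, rfl⟩
      (hbdd.mono (image_mono Ico_subset_Iio_self)) hsup_lt ?_
    rintro _ ⟨a', ⟨hβa', ha'⟩, rfl⟩
    exact hD.degree_Cval (hdef a' ha') hβa'
  have hmem : sSup (f '' Iio a) ∈ CSet S D a b :=
    ⟨hsup_lt, hb_lt, a, le_rfl, ha, (hD.limit a ha halim _ hsup_lt).mpr hdeg⟩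
  exact le_antisymm (Cval_le hmem) hsup_le
end

section
/- Let D be a degree on the ordinal S and let b < S. Suppose e = C(a_1,…,a_m;b) and f = C(c_1,…,c_n;b) (m, n ≥ 1) are standard representations over the same base b. Then a_m ≥ … ≥ a_2 ≥ a_1, and e < f if and only if the finite sequence (a_m,…,a_2,a_1) is lexicographically less than (c_n,…,c_2,c_1), where in the lexicographic order on finite sequences of ordinals a proper initial segment precedes any of its extensions. -/
open Ordinal Set

noncomputable section

/-- The nested value `C(a₁, C(a₂, …, C(aₘ, b)…))` for a list `[a₁, …, aₘ]` over base `b`. -/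
def CList (S : Ordinal) (D : Ordinal → Ordinal → Prop) : List Ordinal → Ordinal → Ordinal
  | [], b => b
  | a :: l, b => Cval S D a (CList S D l b)

/-- The representation `C(a₁, …, aₘ; b)` is standard: each `aᵢ` is maximal in
`C(aᵢ, C(a_{i+1}, …, aₘ; b))`, and for each `i < m` the inner value
`C(a_{i+1}, …, aₘ; b)` is minimal there. -/
def CListStandard (S : Ordinal) (D : Ordinal → Ordinal → Prop) : List Ordinal → Ordinal → Prop
  | [], _ => True
  | [a], b => CMaximal S D a b
  | a :: l, b => CListStandard S D l b ∧ CMaximal S D a (CList S D l b) ∧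
      CMinimal S D a (CList S D l b)

end

/-! If `a` is maximal in `C(a, b)` and `t > b` has some degree `≥ a' > a`, then `t` is a
candidate for `C(a, b)` other than `C(a, b)` itself, so `C(a, b) < t`: collapses with smaller
arguments stay below a collapse with a larger one. Together with minimality of the inner values
this forces the arguments of a standard representation to increase outwards, and two standard
representations over the same base compare like their first differing arguments counted from
the inside. -/

section

variable {S : Ordinal} {D : Ordinal → Ordinal → Prop} {a a' b g t x y : Ordinal}
  {l : List Ordinal}

lemma cset_subset_cset {b' : Ordinal} (h : b ≤ b') : CSet S D a b' ⊆ CSet S D a b :=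
  fun _ ⟨hcS, hb'c, hdeg⟩ => ⟨hcS, h.trans_lt hb'c, hdeg⟩

lemma cval_mem (h : CDefined S D a b) : Cval S D a b ∈ CSet S D a b :=
  csInf_mem h

lemma cval_le (h : t ∈ CSet S D a b) : Cval S D a b ≤ t :=
  csInf_le' h

lemma CMaximal.lt_cval (h : CMaximal S D a b) : b < Cval S D a b :=
  (cval_mem h.1).2.1

lemma CMaximal.cval_lt_of_mem_cset (h : CMaximal S D a b) (ht : t ∈ CSet S D a' b)
    (haa' : a < a') : Cval S D a b < t := by
  obtain ⟨htS, hbt, a'', ha'a'', ha''S, hdeg⟩ := ht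
  refine (cval_le ⟨htS, hbt, a'', (haa'.trans_le ha'a'').le, ha''S, hdeg⟩).lt_of_ne ?_
  rintro rfl
  exact h.2 a'' (haa'.trans_le ha'a'') ha''S hdeg

lemma CMaximal.cval_lt_cval (h : CMaximal S D a b) (h' : CDefined S D a' b) (haa' : a < a') :
    Cval S D a b < Cval S D a' b :=
  h.cval_lt_of_mem_cset (cval_mem h') haa'

lemma CMinimal.le_of_cmaximal (h : CMinimal S D a (Cval S D a' g)) (h' : CMaximal S D a' g) :
    a ≤ a' := by
  by_contra! ha'a
  have hdef : CDefined S D a g := h.1.mono (cset_subset_cset h'.lt_cval.le)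
  have hmem := cval_mem hdef
  have hle : Cval S D a (Cval S D a' g) ≤ Cval S D a g :=
    cval_le ⟨hmem.1, h'.cval_lt_cval hdef ha'a, hmem.2.2⟩
  exact (h.2 g h'.lt_cval).not_ge hle


lemma clist_append_singleton (l : List Ordinal) (x b : Ordinal) :
    CList S D (l ++ [x]) b = CList S D l (Cval S D x b) := by
  induction l with
  | nil => rfl
  | cons a l ih => exact congrArg (Cval S D a) ih

lemma CListStandard.tail (h : CListStandard S D (a :: l) b) : CListStandard S D l b := by
  cases l with
  | nil => trivial
  | cons => exact h.1

lemma CListStandard.cmaximal (h : CListStandard S D (a :: l) b) :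
    CMaximal S D a (CList S D l b) := by
  cases l with
  | nil => exact h
  | cons => exact h.2.1

lemma CListStandard.of_append_singleton (h : CListStandard S D (l ++ [x]) b) :
    CMaximal S D x b ∧ CListStandard S D l (Cval S D x b) := by
  induction l with
  | nil => exact ⟨h, trivial⟩
  | cons a l ih =>
    refine ⟨(ih h.tail).1, ?_⟩
    cases l with
    | nil => exact h.cmaximal
    | cons a₂ l =>
      simp only [List.cons_append] at h
      obtain ⟨htail, hmax, hmin⟩ := h
      rw [← List.cons_append, clist_append_singleton] at hmax hmin
      exact ⟨(ih htail).2, hmax, hmin⟩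

lemma CListStandard.pairwise (h : CListStandard S D l b) : l.Pairwise (· ≤ ·) := by
  rw [← List.isChain_iff_pairwise]
  induction l with
  | nil => exact .nil
  | cons a l ih =>
    cases l with
    | nil => exact .singleton a
    | cons a₂ l =>
      exact .cons_cons (h.2.2.le_of_cmaximal h.tail.cmaximal) (ih h.tail)

lemma CListStandard.le_clist (h : CListStandard S D l b) : b ≤ CList S D l b := by
  induction l with
  | nil => exact le_rfl
  | cons a l ih => exact (ih h.tail).trans h.cmaximal.lt_cval.le

lemma CListStandard.clist_lt_cval (h : CListStandard S D l b) (hy : CMaximal S D y b)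
    (hly : ∀ a ∈ l, a < y) : CList S D l b < Cval S D y b := by
  induction l with
  | nil => exact hy.lt_cval
  | cons a l ih =>
    have hlt := ih h.tail fun z hz => hly z (List.mem_cons_of_mem a hz)
    have hmem := cval_mem hy.1
    exact h.cmaximal.cval_lt_of_mem_cset ⟨hmem.1, hlt, hmem.2.2⟩ (hly a List.mem_cons_self)

lemma CListStandard.cval_le_clist_append_singleton (h : CListStandard S D (l ++ [y]) b) :
    Cval S D y b ≤ CList S D (l ++ [y]) b := by
  rw [clist_append_singleton]
  exact h.of_append_singleton.2.le_clist

lemma CListStandard.le_of_mem_append_singleton {z : Ordinal} (h : CListStandard S D (l ++ [x]) b)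
    (hz : z ∈ l ++ [x]) : z ≤ x := by
  rcases List.mem_append.1 hz with hz | hz
  · exact (List.pairwise_append.1 h.pairwise).2.2 z hz x (List.mem_singleton_self x)
  · exact (List.mem_singleton.1 hz).le

lemma clist_reverse_lt_of_lex {ra rc : List Ordinal} (hlex : List.Lex (· < ·) ra rc)
    (ha : CListStandard S D ra.reverse b) (hc : CListStandard S D rc.reverse b) :
    CList S D ra.reverse b < CList S D rc.reverse b := by
  induction hlex generalizing b with
  | nil =>
    simp only [List.reverse_cons, List.reverse_nil] at hc ⊢
    exact hc.of_append_singleton.1.lt_cval.trans_le hc.cval_le_clist_append_singleton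
  | cons _ ih =>
    simp only [List.reverse_cons, clist_append_singleton] at ha hc ⊢
    exact ih ha.of_append_singleton.2 hc.of_append_singleton.2
  | rel hxy =>
    simp only [List.reverse_cons] at ha hc ⊢
    have hlt : ∀ z ∈ _, z < _ := fun z hz => (ha.le_of_mem_append_singleton hz).trans_lt hxy
    exact (ha.clist_lt_cval hc.of_append_singleton.1 hlt).trans_le
      hc.cval_le_clist_append_singleton

end

theorem standard_rep_sorted_and_lex_comparison_general (S : Ordinal) (D : Ordinal → Ordinal → Prop)
    (b : Ordinal)
    (la lc : List Ordinal)
    (hsa : CListStandard S D la b) (hsc : CListStandard S D lc b) :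
    la.Pairwise (· ≤ ·) ∧
      (CList S D la b < CList S D lc b ↔ List.Lex (· < ·) la.reverse lc.reverse) := by
  have hmono : StrictMonoOn (fun r : List Ordinal => CList S D r.reverse b)
      {r | CListStandard S D r.reverse b} :=
    fun _ hra _ hrc hlex => clist_reverse_lt_of_lex hlex hra hrc
  refine ⟨hsa.pairwise, ?_⟩
  simpa using hmono.lt_iff_lt (a := la.reverse) (b := lc.reverse) (by simpa) (by simpa)

theorem standard_rep_sorted_and_lex_comparison (S : Ordinal) (D : Ordinal → Ordinal → Prop)
    (hD : IsDegree S D) (b : Ordinal) (hb : b < S)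
    (la lc : List Ordinal) (hla : la ≠ []) (hlc : lc ≠ [])
    (haS : ∀ x ∈ la, x < S) (hcS : ∀ x ∈ lc, x < S)
    (hsa : CListStandard S D la b) (hsc : CListStandard S D lc b) :
    la.Pairwise (· ≤ ·) ∧
      (CList S D la b < CList S D lc b ↔ List.Lex (· < ·) la.reverse lc.reverse) :=
  standard_rep_sorted_and_lex_comparison_general S D b la lc hsa hsc
end
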